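/- arXiv:1707.09732 — 9 statements merged into one kernel-verified Lean document; each statement's English description precedes it below -/
import Mathlib

section
/- The matrix B_Q is even, negative definite, and has determinant 64: every diagonal entry of B_Q is even, x^T B_Q x < 0 for every nonzero x ∈ ℚ⁶, and det B_Q = 64. -/
open Matrix

/-- The Gram matrix `B_Q` of the rank-6 lattice `Q` such that the Néron–Severi lattice of a
triple-double K3 surface with minimal Picard number is isometric to `U ⊕ E₈ ⊕ Q`. -/
def B_Q : Matrix (Fin 6) (Fin 6) ℤ :=
  !![-2,  0,  1,   0,  2,  -1;
      0, -6, -1,  -4,  4,  -5;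
      1, -1, -8,   6,  2,   0;
      0, -4,  6, -16,  4,  -2;
      2,  4,  2,   4, -8,   6;
     -1, -5,  0,  -2,  6, -12]

/-- `B_Q` viewed as a rational matrix. -/
def B_Qℚ : Matrix (Fin 6) (Fin 6) ℚ := B_Q.map ((↑) : ℤ → ℚ)

/-!
Gaussian elimination on `B_Q` needs no row swaps, so `B_Q = L D Lᵀ` over `ℚ` with `L` unit lower
triangular and `D` diagonal with the pivots `-2, -6, -22/3, -80/11, -19/20, -2/19`. Hence
`xᵀ B_Q x = ∑ dᵢ (Lᵀx)ᵢ²`, which is negative for `x ≠ 0` because `Lᵀ` is invertible and every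
pivot is negative, and `det B_Q = ∏ dᵢ = 64`.
-/

namespace Matrix

variable {n R : Type*} [Fintype n] [DecidableEq n]

theorem mul_diagonal_mul_transpose_apply [CommSemiring R] (L : Matrix n n R) (d : n → R)
    (i j : n) : (L * diagonal d * Lᵀ) i j = ∑ k, L i k * d k * L j k := by
  simp only [mul_apply (M := L * diagonal d), mul_diagonal, transpose_apply]

theorem dotProduct_mulVec_mul_diagonal_mul_transpose [CommSemiring R] (L : Matrix n n R)
    (d : n → R) (x : n → R) :
    x ⬝ᵥ ((L * diagonal d * Lᵀ) *ᵥ x) = ∑ i, d i * (Lᵀ *ᵥ x) i ^ 2 := by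
  have hfactor : (L * diagonal d * Lᵀ) *ᵥ x = L *ᵥ (diagonal d *ᵥ (Lᵀ *ᵥ x)) := by
    simp only [mulVec_mulVec, Matrix.mul_assoc]
  rw [hfactor, dotProduct_mulVec, ← mulVec_transpose]
  simp only [dotProduct, mulVec_diagonal]
  exact Finset.sum_congr rfl fun i _ ↦ by ring

theorem dotProduct_mulVec_mul_diagonal_mul_transpose_neg [CommRing R] [LinearOrder R]
    [IsStrictOrderedRing R] {L : Matrix n n R} (hL : IsUnit L.det) {d : n → R}
    (hd : ∀ i, d i < 0) {x : n → R} (hx : x ≠ 0) :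
    x ⬝ᵥ ((L * diagonal d * Lᵀ) *ᵥ x) < 0 := by
  have hy : Lᵀ *ᵥ x ≠ 0 := by
    have hLT : IsUnit Lᵀ := (isUnit_iff_isUnit_det _).mpr (by rwa [det_transpose])
    rwa [← mulVec_zero Lᵀ, (mulVec_injective_of_isUnit hLT).ne_iff]
  obtain ⟨i, hi⟩ := Function.ne_iff.mp hy
  rw [dotProduct_mulVec_mul_diagonal_mul_transpose]
  refine Finset.sum_neg' (fun j _ ↦ mul_nonpos_of_nonpos_of_nonneg (hd j).le (sq_nonneg _))
    ⟨i, Finset.mem_univ i, mul_neg_of_neg_of_pos (hd i) (sq_pos_of_ne_zero hi)⟩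

theorem det_eq_one_of_isLowerTriangular [LinearOrder n] [CommRing R] {L : Matrix n n R}
    (hL : L.IsLowerTriangular) (hL₁ : ∀ i, L i i = 1) : L.det = 1 := by
  simp [det_of_isLowerTriangular L hL, hL₁]

theorem det_mul_diagonal_mul_transpose [CommRing R] (L : Matrix n n R) (d : n → R) :
    (L * diagonal d * Lᵀ).det = L.det ^ 2 * ∏ i, d i := by
  rw [det_mul, det_mul, det_transpose, det_diagonal]
  ring

end Matrix

def ldlLower : Matrix (Fin 6) (Fin 6) ℚ :=
  !![   1,    0,      0,      0,      0, 0;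
        0,    1,      0,      0,      0, 0;
     -1/2,  1/6,      1,      0,      0, 0;
        0,  2/3, -10/11,      1,      0, 0;
       -1, -2/3,  -7/22, -19/40,      1, 0;
      1/2,  5/6,  -1/22,  -9/40, -51/19, 1]

def ldlDiag : Fin 6 → ℚ := ![-2, -6, -22/3, -80/11, -19/20, -2/19]

lemma ldlDiag_neg : ∀ i, ldlDiag i < 0 := by
  norm_num [Fin.forall_fin_succ, ldlDiag]

lemma ldlDiag_prod : ∏ i, ldlDiag i = 64 := by
  simp only [Fin.prod_univ_six, ldlDiag, cons_val]
  norm_num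

lemma ldlLower_det : ldlLower.det = 1 :=
  det_eq_one_of_isLowerTriangular (by decide) (by decide)

lemma B_Qℚ_eq_ldl : B_Qℚ = ldlLower * diagonal ldlDiag * ldlLowerᵀ := by
  ext i j
  rw [mul_diagonal_mul_transpose_apply]
  fin_cases i <;> fin_cases j <;>
    simp [B_Qℚ, B_Q, ldlLower, ldlDiag, Fin.sum_univ_six] <;> norm_num

/-- The matrix `B_Q` is even (every diagonal entry is even), negative definite
(`x^T B_Q x < 0` for every nonzero rational vector `x`), and has determinant `64`. -/
theorem stmt_0 :
    (∀ i : Fin 6, Even (B_Q i i)) ∧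
    (∀ x : Fin 6 → ℚ, x ≠ 0 → x ⬝ᵥ (B_Qℚ *ᵥ x) < 0) ∧
    B_Q.det = 64 := by
  refine ⟨by decide, fun x hx ↦ ?_, ?_⟩
  · rw [B_Qℚ_eq_ldl]
    exact dotProduct_mulVec_mul_diagonal_mul_transpose_neg (ldlLower_det ▸ isUnit_one)
      ldlDiag_neg hx
  · have : (B_Q.det : ℚ) = 64 := by
      rw [Int.cast_det, ← B_Qℚ, B_Qℚ_eq_ldl, det_mul_diagonal_mul_transpose, ldlLower_det,
        ldlDiag_prod, one_pow, one_mul]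
    exact_mod_cast this
end

section
/- The cokernel of the ℤ-linear endomorphism of ℤ⁶ given by multiplication by the matrix B_Q is isomorphic as an abelian group to ℤ/2 × ℤ/2 × ℤ/4 × ℤ/4; equivalently, the discriminant group A_Q = Q*/Q of the lattice Q with Gram matrix B_Q is isomorphic to ℤ₂² ⊕ ℤ₄². -/
open Matrix

/-- Left transformation matrix in a Smith normal form `U * B_Q * V = D`. -/
def Umat : Matrix (Fin 6) (Fin 6) ℤ :=
  !![1, 0, 0, 0, 0, 0;
     -8, 0, -1, 0, 0, 0;
     174, 0, 31, 7, 16, 1;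
     709, 1, 126, 28, 66, 4;
     27668, 36, 4919, 1095, 2575, 157;
     880, 2, 153, 32, 77, 3]

/-- Right transformation matrix in a Smith normal form `U * B_Q * V = D`. -/
def Vmat : Matrix (Fin 6) (Fin 6) ℤ :=
  !![0, 0, 1, 0, -2, 62;
     0, 1, -119, -400, 22, 0;
     1, 0, 20, 67, -5, 41;
     0, 0, 0, 2, -1, 28;
     0, 0, 20, 62, -5, 49;
     0, 0, 58, 191, -11, 15]

/-- Inverse of `Umat`. -/
def Wmat : Matrix (Fin 6) (Fin 6) ℤ :=
  !![1, 0, 0, 0, 0, 0;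
     -1, -6, 242, 809, -22, -8;
     -8, -1, 0, 0, 0, 0;
     6, -4, 280, 918, -25, -9;
     2, 4, -123, -404, 11, 4;
     0, -5, 9, 38, -1, -1]

/-- The Smith normal form `diag(1,1,2,2,4,4)` of `B_Q`. -/
def Dmat : Matrix (Fin 6) (Fin 6) ℤ :=
  !![1, 0, 0, 0, 0, 0;
     0, 1, 0, 0, 0, 0;
     0, 0, 2, 0, 0, 0;
     0, 0, 0, 2, 0, 0;
     0, 0, 0, 0, 4, 0;
     0, 0, 0, 0, 0, 4]

/-- The product `Umat * B_Q`. -/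
def Mmat : Matrix (Fin 6) (Fin 6) ℤ :=
  !![-2, 0, 1, 0, 2, -1;
     15, 1, 0, -6, -18, 8;
     -286, 0, 0, 136, 316, -104;
     -1164, 0, 0, 560, 1282, -422;
     -45424, 0, 0, 21836, 50040, -16472;
     -1456, 0, 0, 700, 1604, -528]

section VecSimp
variable {α : Type*} (a b c d e f : α)
@[simp] lemma vec6_0 : ![a, b, c, d, e, f] 0 = a := rfl
@[simp] lemma vec6_1 : ![a, b, c, d, e, f] 1 = b := rfl
@[simp] lemma vec6_2 : ![a, b, c, d, e, f] 2 = c := rfl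
@[simp] lemma vec6_3 : ![a, b, c, d, e, f] 3 = d := rfl
@[simp] lemma vec6_4 : ![a, b, c, d, e, f] 4 = e := rfl
@[simp] lemma vec6_5 : ![a, b, c, d, e, f] 5 = f := rfl
@[simp] lemma vec6_mk0 (h : 0 < 6) : ![a, b, c, d, e, f] ⟨0, h⟩ = a := rfl
@[simp] lemma vec6_mk1 (h : 1 < 6) : ![a, b, c, d, e, f] ⟨1, h⟩ = b := rfl
@[simp] lemma vec6_mk2 (h : 2 < 6) : ![a, b, c, d, e, f] ⟨2, h⟩ = c := rfl
@[simp] lemma vec6_mk3 (h : 3 < 6) : ![a, b, c, d, e, f] ⟨3, h⟩ = d := rfl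
@[simp] lemma vec6_mk4 (h : 4 < 6) : ![a, b, c, d, e, f] ⟨4, h⟩ = e := rfl
@[simp] lemma vec6_mk5 (h : 5 < 6) : ![a, b, c, d, e, f] ⟨5, h⟩ = f := rfl
end VecSimp

lemma hWU : Wmat * Umat = 1 := by decide
lemma hUW : Umat * Wmat = 1 := by decide
lemma hUB : Umat * B_Q = Mmat := by decide
lemma hBV : B_Q * Vmat = Wmat * Dmat := by decide

/-- The map detecting the discriminant group. -/
def g : (Fin 6 → ℤ) →ₗ[ℤ] ZMod 2 × ZMod 2 × ZMod 4 × ZMod 4 where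
  toFun x := (((Umat.mulVec x 2 : ℤ) : ZMod 2), ((Umat.mulVec x 3 : ℤ) : ZMod 2),
              ((Umat.mulVec x 4 : ℤ) : ZMod 4), ((Umat.mulVec x 5 : ℤ) : ZMod 4))
  map_add' x y := by
    simp [Matrix.mulVec_add, Prod.ext_iff]
  map_smul' c x := by
    simp only [Prod.ext_iff, Prod.smul_def, zsmul_eq_mul, RingHom.id_apply,
      Matrix.mulVec, dotProduct, Fin.sum_univ_six, Pi.smul_apply, smul_eq_mul]
    refine ⟨?_, ?_, ?_, ?_⟩ <;> push_cast <;> ring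

lemma g_surj : Function.Surjective g := by
  rintro ⟨a, b, c, d⟩
  obtain ⟨a', ha⟩ := ZMod.intCast_surjective a
  obtain ⟨b', hb⟩ := ZMod.intCast_surjective b
  obtain ⟨c', hc⟩ := ZMod.intCast_surjective c
  obtain ⟨d', hd⟩ := ZMod.intCast_surjective d
  refine ⟨Wmat.mulVec ![0, 0, a', b', c', d'], ?_⟩
  have h : Umat.mulVec (Wmat.mulVec ![0, 0, a', b', c', d']) = ![0, 0, a', b', c', d'] := by
    rw [Matrix.mulVec_mulVec, hUW, Matrix.one_mulVec]
  simp [g, h, Matrix.cons_val_succ, ha, hb, hc, hd]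

lemma g_ker : LinearMap.ker g = LinearMap.range B_Q.mulVecLin := by
  apply le_antisymm
  · intro x hx
    simp only [LinearMap.mem_ker, g, LinearMap.coe_mk, AddHom.coe_mk, Prod.mk.injEq, Prod.mk_eq_zero] at hx
    obtain ⟨h2, h3, h4, h5⟩ := hx
    rw [ZMod.intCast_zmod_eq_zero_iff_dvd] at h2 h3 h4 h5
    obtain ⟨k2, hk2⟩ := h2
    obtain ⟨k3, hk3⟩ := h3
    obtain ⟨k4, hk4⟩ := h4
    obtain ⟨k5, hk5⟩ := h5
    norm_cast at hk2 hk3 hk4 hk5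
    refine ⟨Vmat.mulVec ![Umat.mulVec x 0, Umat.mulVec x 1, k2, k3, k4, k5], ?_⟩
    have h6 : Umat.mulVec x = ![Umat.mulVec x 0, Umat.mulVec x 1, Umat.mulVec x 2,
        Umat.mulVec x 3, Umat.mulVec x 4, Umat.mulVec x 5] := by
      funext i; fin_cases i <;> rfl
    have hD' : Dmat.mulVec ![Umat.mulVec x 0, Umat.mulVec x 1, k2, k3, k4, k5]
        = ![Umat.mulVec x 0, Umat.mulVec x 1, 2 * k2, 2 * k3, 4 * k4, 4 * k5] := by
      funext i
      fin_cases i <;>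
        simp only [Dmat, Matrix.mulVec, dotProduct, Fin.sum_univ_six, Matrix.of_apply,
          vec6_0, vec6_1, vec6_2, vec6_3, vec6_4, vec6_5,
          vec6_mk0, vec6_mk1, vec6_mk2, vec6_mk3, vec6_mk4, vec6_mk5] <;> ring
    have hD : Dmat.mulVec ![Umat.mulVec x 0, Umat.mulVec x 1, k2, k3, k4, k5]
        = Umat.mulVec x := by
      rw [hD', ← hk2, ← hk3, ← hk4, ← hk5, ← h6]
    rw [Matrix.mulVecLin_apply, Matrix.mulVec_mulVec, hBV, ← Matrix.mulVec_mulVec, hD,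
      Matrix.mulVec_mulVec, hWU, Matrix.one_mulVec]
  · rintro _ ⟨y, rfl⟩
    simp only [LinearMap.mem_ker, g, LinearMap.coe_mk, AddHom.coe_mk, Matrix.mulVecLin_apply,
      Matrix.mulVec_mulVec, hUB, Prod.mk.injEq, Prod.mk_eq_zero]
    refine ⟨?_, ?_, ?_, ?_⟩ <;>
    · rw [ZMod.intCast_zmod_eq_zero_iff_dvd]
      simp only [Mmat, Matrix.mulVec, dotProduct, Fin.sum_univ_six, Matrix.of_apply,
        vec6_0, vec6_1, vec6_2, vec6_3, vec6_4, vec6_5]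
      omega

/-- The cokernel `ℤ⁶/B_Qℤ⁶` of multiplication by `B_Q`, i.e. the discriminant group
`A_Q = Q*/Q` of the lattice `Q`, is isomorphic to `ℤ₂² ⊕ ℤ₄²`. -/
theorem stmt_2 :
    Nonempty (((Fin 6 → ℤ) ⧸ LinearMap.range B_Q.mulVecLin) ≃+
      (ZMod 2 × ZMod 2 × ZMod 4 × ZMod 4)) := by
  exact ⟨((Submodule.quotEquivOfEq _ _ g_ker.symm).trans
    (g.quotKerEquivOfSurjective g_surj)).toAddEquiv⟩
end

section
/- Let G_T be the block-diagonal 6×6 integer matrix with blocks U, U(2), ⟨-4⟩, ⟨-4⟩, and let α = (1,2,0,0,0,0), β = (0,0,1,1,0,0) ∈ ℤ⁶. Then α^T G_T α = 4, β^T G_T β = 4, α^T G_T β = 0, and the ℤ-submodule L of ℤ⁶ spanned by α and β is primitive, i.e. the quotient ℤ⁶/L is torsion-free (equivalently: whenever m > 1 is an integer and x ∈ ℤ⁶ satisfies m·x ∈ L, then x ∈ L). Hence the lattice ⟨4⟩ ⊕ ⟨4⟩, which is the transcendental lattice of the Kummer surface Km(E_i × E_i), admits a primitive isometric embedding into U ⊕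 U(2) ⊕ ⟨-4⟩ ⊕ ⟨-4⟩, the transcendental lattice of a triple-double K3 surface with minimal Picard number. -/
open Matrix

/-- The block-diagonal Gram matrix of `U ⊕ U(2) ⊕ ⟨-4⟩ ⊕ ⟨-4⟩`, the transcendental lattice
of a triple-double K3 surface with minimal Picard number. -/
def G_T : Matrix (Fin 6) (Fin 6) ℤ :=
  !![0, 1, 0, 0,  0,  0;
     1, 0, 0, 0,  0,  0;
     0, 0, 0, 2,  0,  0;
     0, 0, 2, 0,  0,  0;
     0, 0, 0, 0, -4,  0;
     0, 0, 0, 0,  0, -4]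

def α : Fin 6 → ℤ := ![1, 2, 0, 0, 0, 0]
def β : Fin 6 → ℤ := ![0, 0, 1, 1, 0, 0]

/-- The vectors `α, β` span a primitive sublattice of `U ⊕ U(2) ⊕ ⟨-4⟩ ⊕ ⟨-4⟩` isometric to
`⟨4⟩ ⊕ ⟨4⟩` (the transcendental lattice of `Km(E_i × E_i)`): `α² = β² = 4`, `α·β = 0`, and
the `ℤ`-span of `α, β` is primitive (whenever `m > 1` and `m • x` lies in the span, so does
`x`). -/
theorem stmt_7 :
    α ⬝ᵥ (G_T *ᵥ α) = 4 ∧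
    β ⬝ᵥ (G_T *ᵥ β) = 4 ∧
    α ⬝ᵥ (G_T *ᵥ β) = 0 ∧
    (∀ (m : ℤ) (x : Fin 6 → ℤ), 1 < m →
      m • x ∈ Submodule.span ℤ ({α, β} : Set (Fin 6 → ℤ)) →
      x ∈ Submodule.span ℤ ({α, β} : Set (Fin 6 → ℤ))) := by
  refine ⟨by decide, by decide, by decide, ?_⟩
  intro m x hm hmem
  have hm0 : m ≠ 0 := by omega
  obtain ⟨a, b, h⟩ := Submodule.mem_span_pair.mp hmem
  have hc : ∀ i, a * α i + b * β i = m * x i := by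
    intro i
    have := congrFun h i
    simpa [smul_eq_mul] using this
  have h0 := hc 0; have h1 := hc 1; have h2 := hc 2; have h3 := hc 3
  have h4 := hc 4; have h5 := hc 5
  have hv5 : ∀ (v0 v1 v2 v3 v4 v5 : ℤ), ![v0, v1, v2, v3, v4, v5] 5 = v5 := fun _ _ _ _ _ _ => rfl
  simp [α, β, hv5] at h0 h1 h2 h3 h4 h5
  have e1 : x 1 = x 0 * 2 := by
    refine mul_left_cancel₀ hm0 ?_
    rw [← h1, ← mul_assoc, ← h0]
  have e3 : x 3 = x 2 := mul_left_cancel₀ hm0 (h3.symm.trans h2)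
  have e4 : x 4 = 0 := h4.resolve_left hm0
  have e5 : x 5 = 0 := h5.resolve_left hm0
  refine Submodule.mem_span_pair.mpr ⟨x 0, x 2, ?_⟩
  funext i
  fin_cases i <;>
    simp [α, β, smul_eq_mul, e1, e3, e4, e5, hv5]
end

section
/- Let G₁ be the block-diagonal 6×6 integer matrix with blocks U, U(2), ⟨-4⟩, ⟨-4⟩, and let G₂ be the block-diagonal 8×8 integer matrix with blocks U(2), U(2), U(2), ⟨-4⟩, ⟨-4⟩. Then there is no 8×6 integer matrix F such that F^T G₂ F = G₁; i.e., the lattice U ⊕ U(2) ⊕ ⟨-4⟩ ⊕ ⟨-4⟩ admits no isometric embedding into U(2) ⊕ U(2) ⊕ U(2) ⊕ ⟨-4⟩ ⊕ ⟨-4⟩. (Indeed, the vector (1,1,0,0,0,0) has square 2 with respect to G₁, whereas x^T G₂ x is divisible by 4 for every x ∈ ℤ⁸.) -/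
open Matrix

/-- The block-diagonal Gram matrix of `U ⊕ U(2) ⊕ ⟨-4⟩ ⊕ ⟨-4⟩`, the transcendental lattice
`T_X` of a triple-double K3 surface `X` with minimal Picard number. -/
def G₁ : Matrix (Fin 6) (Fin 6) ℤ :=
  !![0, 1, 0, 0,  0,  0;
     1, 0, 0, 0,  0,  0;
     0, 0, 0, 2,  0,  0;
     0, 0, 2, 0,  0,  0;
     0, 0, 0, 0, -4,  0;
     0, 0, 0, 0,  0, -4]

/-- The block-diagonal Gram matrix of `U(2) ⊕ U(2) ⊕ U(2) ⊕ ⟨-4⟩ ⊕ ⟨-4⟩`, the lattice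
`Ω_{ℤ₂³}^⊥`. -/
def G₂ : Matrix (Fin 8) (Fin 8) ℤ :=
  !![0, 2, 0, 0, 0, 0,  0,  0;
     2, 0, 0, 0, 0, 0,  0,  0;
     0, 0, 0, 2, 0, 0,  0,  0;
     0, 0, 2, 0, 0, 0,  0,  0;
     0, 0, 0, 0, 0, 2,  0,  0;
     0, 0, 0, 0, 2, 0,  0,  0;
     0, 0, 0, 0, 0, 0, -4,  0;
     0, 0, 0, 0, 0, 0,  0, -4]

/-- The lattice `U ⊕ U(2) ⊕ ⟨-4⟩ ⊕ ⟨-4⟩` admits no isometric embedding into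
`U(2) ⊕ U(2) ⊕ U(2) ⊕ ⟨-4⟩ ⊕ ⟨-4⟩`. -/
theorem stmt_8 : ¬ ∃ F : Matrix (Fin 8) (Fin 6) ℤ, F.transpose * G₂ * F = G₁ := by
  rintro ⟨F, h⟩
  have h01 := congrFun (congrFun h 0) 1
  have e3 : (Fin.succ 2 : Fin 8) = 3 := rfl
  have e4 : ((Fin.succ 2).succ : Fin 8) = 4 := rfl
  have e5 : ((Fin.succ 2).succ.succ : Fin 8) = 5 := rfl
  have e6 : ((Fin.succ 2).succ.succ.succ : Fin 8) = 6 := rfl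
  have e7 : ((Fin.succ 2).succ.succ.succ.succ : Fin 8) = 7 := rfl
  simp [Matrix.mul_apply, Matrix.transpose_apply, Fin.sum_univ_succ, G₁, G₂,
    e3, e4, e5, e6, e7] at h01
  have : (2:ℤ) ∣ 1 := ⟨F 0 0 * F 1 1 + F 1 0 * F 0 1 + F 2 0 * F 3 1 + F 3 0 * F 2 1
    + F 4 0 * F 5 1 + F 5 0 * F 4 1 - 2 * (F 6 0 * F 6 1) - 2 * (F 7 0 * F 7 1),
    by linarith [h01]⟩
  norm_num at this
end

section
/- Let G₁ be the block-diagonal 6×6 integer matrix with blocks U, U(2), ⟨-4⟩, ⟨-4⟩, and let G₃ be the block-diagonal 8×8 integer matrix with blocks ⟨2⟩, ⟨2⟩, U(2), ⟨-2⟩, ⟨-2⟩, ⟨-2⟩, ⟨-2⟩. Then there is no 8×6 integer matrix F such that F^T G₃ F = G₁; i.e., the lattice U ⊕ U(2) ⊕ ⟨-4⟩ ⊕ ⟨-4⟩ admits no isometric embedding into ⟨2⟩² ⊕ U(2) ⊕ ⟨-2⟩⁴. (Indeed, the standard basis vectors e₁, e₂ pair to 1 with respect to G₁, whereas x^T G₃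 y is even for all x, y ∈ ℤ⁸.) -/
open Matrix

/-- The block-diagonal Gram matrix of `⟨2⟩ ⊕ ⟨2⟩ ⊕ U(2) ⊕ ⟨-2⟩ ⊕ ⟨-2⟩ ⊕ ⟨-2⟩ ⊕ ⟨-2⟩`,
which is isometric to the orthogonal complement of the Nikulin-type lattice `M_{ℤ₂³}` in
the K3 lattice. -/
def G₃ : Matrix (Fin 8) (Fin 8) ℤ :=
  !![2, 0, 0, 0,  0,  0,  0,  0;
     0, 2, 0, 0,  0,  0,  0,  0;
     0, 0, 0, 2,  0,  0,  0,  0;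
     0, 0, 2, 0,  0,  0,  0,  0;
     0, 0, 0, 0, -2,  0,  0,  0;
     0, 0, 0, 0,  0, -2,  0,  0;
     0, 0, 0, 0,  0,  0, -2,  0;
     0, 0, 0, 0,  0,  0,  0, -2]

/-- Half of `G₃`. -/
def H₃ : Matrix (Fin 8) (Fin 8) ℤ :=
  !![1, 0, 0, 0,  0,  0,  0,  0;
     0, 1, 0, 0,  0,  0,  0,  0;
     0, 0, 0, 1,  0,  0,  0,  0;
     0, 0, 1, 0,  0,  0,  0,  0;
     0, 0, 0, 0, -1,  0,  0,  0;
     0, 0, 0, 0,  0, -1,  0,  0;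
     0, 0, 0, 0,  0,  0, -1,  0;
     0, 0, 0, 0,  0,  0,  0, -1]

lemma G₃_eq : G₃ = (2 : ℤ) • H₃ := by
  ext i j
  rw [Matrix.smul_apply]
  fin_cases i <;> fin_cases j <;> norm_num [G₃, H₃]

/-- The lattice `U ⊕ U(2) ⊕ ⟨-4⟩ ⊕ ⟨-4⟩` admits no isometric embedding into
`⟨2⟩² ⊕ U(2) ⊕ ⟨-2⟩⁴`. -/
theorem stmt_9 : ¬ ∃ F : Matrix (Fin 8) (Fin 6) ℤ, F.transpose * G₃ * F = G₁ := by
  rintro ⟨F, h⟩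
  rw [G₃_eq] at h
  have h01 := congrFun (congrFun h 0) 1
  have : (2 : ℤ) ∣ (F.transpose * ((2:ℤ) • H₃) * F) 0 1 := by
    rw [Matrix.mul_smul, Matrix.smul_mul]
    exact ⟨_, rfl⟩
  rw [h01] at this
  norm_num [G₁] at this
end

section
/- In ℤ³ equipped with the bilinear form given by the block-diagonal Gram matrix with blocks U(2) and ⟨-8⟩, the vectors γ = (1,1,1) and δ = (-1,1,0) satisfy γ^T G γ = -4, δ^T G δ = -4, γ^T G δ = 0, and the ℤ-submodule L of ℤ³ spanned by γ and δ is primitive, i.e. the quotient ℤ³/L is torsion-free. Hence the lattice ⟨-4⟩ ⊕ ⟨-4⟩ admits a primitive isometric embedding into U(2) ⊕ ⟨-8⟩. -/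
open Matrix

/-- The block-diagonal Gram matrix of `U(2) ⊕ ⟨-8⟩`. -/
def G : Matrix (Fin 3) (Fin 3) ℤ :=
  !![0, 2,  0;
     2, 0,  0;
     0, 0, -8]

def γ : Fin 3 → ℤ := ![1, 1, 1]
def δ : Fin 3 → ℤ := ![-1, 1, 0]

/-- The vectors `γ = (1,1,1)` and `δ = (-1,1,0)` span a primitive sublattice of
`U(2) ⊕ ⟨-8⟩` isometric to `⟨-4⟩ ⊕ ⟨-4⟩`: `γ² = δ² = -4`, `γ·δ = 0`, and the `ℤ`-span of
`γ, δ` is primitive (the quotient `ℤ³/L` is torsion-free). -/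
theorem stmt_11 :
    γ ⬝ᵥ (G *ᵥ γ) = -4 ∧
    δ ⬝ᵥ (G *ᵥ δ) = -4 ∧
    γ ⬝ᵥ (G *ᵥ δ) = 0 ∧
    (∀ (m : ℤ) (x : Fin 3 → ℤ), m ≠ 0 →
      m • x ∈ Submodule.span ℤ ({γ, δ} : Set (Fin 3 → ℤ)) →
      x ∈ Submodule.span ℤ ({γ, δ} : Set (Fin 3 → ℤ))) := by
  refine ⟨by simp [γ, δ, G, Matrix.mulVec, dotProduct, Fin.sum_univ_three, Matrix.vecHead, Matrix.vecTail],
    by simp [γ, δ, G, Matrix.mulVec, dotProduct, Fin.sum_univ_three, Matrix.vecHead, Matrix.vecTail],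
    by simp [γ, δ, G, Matrix.mulVec, dotProduct, Fin.sum_univ_three, Matrix.vecHead, Matrix.vecTail], ?_⟩
  intro m x hm h
  rw [Submodule.mem_span_pair] at h ⊢
  obtain ⟨a, b, hab⟩ := h
  have h0 := congrFun hab 0
  have h1 := congrFun hab 1
  have h2 := congrFun hab 2
  simp [γ, δ] at h0 h1 h2
  refine ⟨x 2, x 2 - x 0, ?_⟩
  funext i
  have hx1 : x 1 = 2 * x 2 - x 0 := by
    have : m * x 1 = m * (2 * x 2 - x 0) := by linarith
    exact mul_left_cancel₀ hm this
  fin_cases i <;> simp [γ, δ] <;> linarith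
end

section
/- Let G₄ be the block-diagonal 7×7 integer matrix with blocks U(2), U(2), U(2), ⟨-8⟩, and let G₅ be the block-diagonal 6×6 integer matrix with blocks U(2), U(2), ⟨-4⟩, ⟨-4⟩. Then there exists a 7×6 integer matrix F such that F^T G₄ F = G₅ and the quotient ℤ⁷/F(ℤ⁶) is torsion-free; i.e., the lattice U(2) ⊕ U(2) ⊕ ⟨-4⟩ ⊕ ⟨-4⟩ admits a primitive isometric embedding into U(2) ⊕ U(2) ⊕ U(2) ⊕ ⟨-8⟩. (One such F acts as the identity on the first four coordinates and sends the fifth and sixth standard basis vectors to (0,0,0,0,1,1,1) and (0,0,0,0,-1,1,0) respectively.) -/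
open Matrix

/-- The block-diagonal Gram matrix of `U(2) ⊕ U(2) ⊕ U(2) ⊕ ⟨-8⟩ = Ω_{ℤ₂⁴}^⊥`. -/
def G₄ : Matrix (Fin 7) (Fin 7) ℤ :=
  !![0, 2, 0, 0, 0, 0,  0;
     2, 0, 0, 0, 0, 0,  0;
     0, 0, 0, 2, 0, 0,  0;
     0, 0, 2, 0, 0, 0,  0;
     0, 0, 0, 0, 0, 2,  0;
     0, 0, 0, 0, 2, 0,  0;
     0, 0, 0, 0, 0, 0, -8]

/-- The block-diagonal Gram matrix of `U(2) ⊕ U(2) ⊕ ⟨-4⟩ ⊕ ⟨-4⟩`, the transcendental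
lattice of the K3 surface `X'` obtained as the minimal resolution of the quotient of a
triple-double K3 surface by a Nikulin involution (with minimal Picard number `16`). -/
def G₅ : Matrix (Fin 6) (Fin 6) ℤ :=
  !![0, 2, 0, 0,  0,  0;
     2, 0, 0, 0,  0,  0;
     0, 0, 0, 2,  0,  0;
     0, 0, 2, 0,  0,  0;
     0, 0, 0, 0, -4,  0;
     0, 0, 0, 0,  0, -4]

def Fmat : Matrix (Fin 7) (Fin 6) ℤ :=
  !![1, 0, 0, 0,  0,  0;
     0, 1, 0, 0,  0,  0;
     0, 0, 1, 0,  0,  0;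
     0, 0, 0, 1,  0,  0;
     0, 0, 0, 0,  1, -1;
     0, 0, 0, 0,  1,  1;
     0, 0, 0, 0,  1,  0]

def Lmat : Matrix (Fin 6) (Fin 7) ℤ :=
  !![1, 0, 0, 0,  0, 0, 0;
     0, 1, 0, 0,  0, 0, 0;
     0, 0, 1, 0,  0, 0, 0;
     0, 0, 0, 1,  0, 0, 0;
     0, 0, 0, 0,  0, 0, 1;
     0, 0, 0, 0, -1, 0, 1]

lemma LF : Lmat * Fmat = 1 := by decide

/-- The lattice `U(2) ⊕ U(2) ⊕ ⟨-4⟩ ⊕ ⟨-4⟩` admits a primitive isometric embedding into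
`U(2) ⊕ U(2) ⊕ U(2) ⊕ ⟨-8⟩`: there is an integer matrix `F` with `F^T G₄ F = G₅` whose
image is a primitive sublattice (the quotient `ℤ⁷/F(ℤ⁶)` is torsion-free). -/
theorem stmt_12 :
    ∃ F : Matrix (Fin 7) (Fin 6) ℤ,
      F.transpose * G₄ * F = G₅ ∧
      (∀ (m : ℤ) (x : Fin 7 → ℤ), m ≠ 0 →
        m • x ∈ LinearMap.range F.mulVecLin → x ∈ LinearMap.range F.mulVecLin) := by
  refine ⟨Fmat, by decide, ?_⟩
  rintro m x hm ⟨c, hc⟩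
  refine ⟨Lmat.mulVec x, ?_⟩
  have h1 : m • (Fmat.mulVecLin (Lmat.mulVec x)) = m • x := by
    simp only [Matrix.mulVecLin_apply] at hc ⊢
    calc m • Fmat.mulVec (Lmat.mulVec x)
        = Fmat.mulVec (Lmat.mulVec (m • x)) := by
          rw [Matrix.mulVec_smul, Matrix.mulVec_smul]
      _ = Fmat.mulVec (Lmat.mulVec (Fmat.mulVec c)) := by rw [hc]
      _ = ((Fmat * Lmat) * Fmat).mulVec c := by
          rw [← Matrix.mulVec_mulVec, ← Matrix.mulVec_mulVec]
      _ = Fmat.mulVec c := by rw [Matrix.mul_assoc, LF, Matrix.mul_one]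
      _ = m • x := hc
  exact smul_right_injective (Fin 7 → ℤ) hm h1
end

section
/- Let c: {0,1}³ → ℂ be a function with c(i,j,k) ≠ 0 for all (i,j,k), and let X ⊂ ℙ¹ × ℙ¹ × ℙ¹ be the hypersurface defined by Σ_{i,j,k ∈ {0,1}} c(i,j,k)·Xᵢ²·Yⱼ²·Zₖ² = 0. Let ι₁₁₀ be the involution of ℙ¹ × ℙ¹ × ℙ¹ sending ([X₀:X₁],[Y₀:Y₁],[Z₀:Z₁]) to ([X₀:-X₁],[Y₀:-Y₁],[Z₀:Z₁]). Then the set of points of X fixed by ι₁₁₀ is finite and has exactly 8 elements. -/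
open scoped LinearAlgebra.Projectivization

/-- The projective line `ℙ¹` over `ℂ`. -/
abbrev P1 := Projectivization ℂ (Fin 2 → ℂ)

/-- The map `(v₀, v₁) ↦ (v₀, -v₁)` on `ℂ²`. -/
def negSnd (v : Fin 2 → ℂ) : Fin 2 → ℂ := ![v 0, -v 1]

theorem negSnd_ne_zero {v : Fin 2 → ℂ} (hv : v ≠ 0) : negSnd v ≠ 0 := by
  intro h
  apply hv
  have h0 := congrFun h 0
  have h1 := congrFun h 1
  simp [negSnd] at h0 h1
  funext i
  fin_cases i <;> simp [h0, h1]

/-- The involution `[X₀ : X₁] ↦ [X₀ : -X₁]` of `ℙ¹`. -/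
noncomputable def iota (p : P1) : P1 :=
  Projectivization.mk ℂ (negSnd p.rep) (negSnd_ne_zero p.rep_nonzero)

/-- The involution `ι₁₁₀` of `ℙ¹ × ℙ¹ × ℙ¹` sending `([X₀:X₁],[Y₀:Y₁],[Z₀:Z₁])` to
`([X₀:-X₁],[Y₀:-Y₁],[Z₀:Z₁])`. -/
noncomputable def iota110 (t : P1 × P1 × P1) : P1 × P1 × P1 :=
  (iota t.1, iota t.2.1, t.2.2)

/-- The triple-double K3 hypersurface `X ⊂ ℙ¹ × ℙ¹ × ℙ¹` defined by
`Σ_{i,j,k} c_{ijk} Xᵢ² Yⱼ² Zₖ² = 0`. -/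
noncomputable def Xhyp (c : Fin 2 → Fin 2 → Fin 2 → ℂ) : Set (P1 × P1 × P1) :=
  {t | ∑ i : Fin 2, ∑ j : Fin 2, ∑ k : Fin 2,
    c i j k * (t.1.rep i) ^ 2 * (t.2.1.rep j) ^ 2 * (t.2.2.rep k) ^ 2 = 0}

noncomputable def pt (i : Fin 2) : P1 :=
  Projectivization.mk ℂ (Pi.single i 1) (by intro h; have := congrFun h i; simp at this)

noncomputable def qpt (u : ℂ) : P1 :=
  Projectivization.mk ℂ ![1, u] (by intro h; have := congrFun h 0; simp at this)

lemma rep_mk (v : Fin 2 → ℂ) (hv : v ≠ 0) :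
    ∃ a : ℂ, a ≠ 0 ∧ (Projectivization.mk ℂ v hv).rep = a • v := by
  obtain ⟨a, ha⟩ := Projectivization.exists_smul_eq_mk_rep ℂ v hv
  exact ⟨a, a.ne_zero, ha.symm⟩

lemma rep_pt (i : Fin 2) : ∃ a : ℂ, a ≠ 0 ∧ (pt i).rep = a • (Pi.single i 1 : Fin 2 → ℂ) :=
  rep_mk _ _

lemma rep_qpt (u : ℂ) : ∃ a : ℂ, a ≠ 0 ∧ (qpt u).rep = a • ![1, u] :=
  rep_mk _ _

lemma iota_fixed_iff (p : P1) : iota p = p ↔ p.rep 0 = 0 ∨ p.rep 1 = 0 := by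
  constructor
  · intro h
    rw [iota] at h
    conv_rhs at h => rw [← Projectivization.mk_rep p]
    rw [Projectivization.mk_eq_mk_iff'] at h
    obtain ⟨a, ha⟩ := h
    have h0 := congrFun ha 0
    have h1 := congrFun ha 1
    simp [negSnd] at h0 h1
    by_cases hr1 : p.rep 1 = 0
    · exact Or.inr hr1
    · left
      have ha1 : a = -1 := by
        have : (a + 1) * p.rep 1 = 0 := by linear_combination h1
        rcases mul_eq_zero.mp this with h | h
        · linear_combination h
        · exact absurd h hr1
      rw [ha1] at h0
      linear_combination (-1/2 : ℂ) * h0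
  · intro h
    rw [iota]
    conv_rhs => rw [← Projectivization.mk_rep p]
    rw [Projectivization.mk_eq_mk_iff']
    rcases h with h | h
    · refine ⟨-1, funext fun i => ?_⟩
      fin_cases i <;> simp [negSnd, h]
    · refine ⟨1, funext fun i => ?_⟩
      fin_cases i <;> simp [negSnd, h]

lemma mem_Xhyp_iff (c : Fin 2 → Fin 2 → Fin 2 → ℂ) (t : P1 × P1 × P1) :
    t ∈ Xhyp c ↔ ∑ i : Fin 2, ∑ j : Fin 2, ∑ k : Fin 2,
      c i j k * (t.1.rep i) ^ 2 * (t.2.1.rep j) ^ 2 * (t.2.2.rep k) ^ 2 = 0 := Iff.rfl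

lemma cancel_sq (a b x : ℂ) (ha : a ≠ 0) (hb : b ≠ 0)
    (h : a ^ 2 * b ^ 2 * x = 0) : x = 0 :=
  (mul_eq_zero.mp h).resolve_left (mul_ne_zero (pow_ne_zero 2 ha) (pow_ne_zero 2 hb))

lemma key_eq (c : Fin 2 → Fin 2 → Fin 2 → ℂ) (i j : Fin 2) (r : P1)
    (hmem : (pt i, pt j, r) ∈ Xhyp c) :
    c i j 0 * (r.rep 0) ^ 2 + c i j 1 * (r.rep 1) ^ 2 = 0 := by
  obtain ⟨a, ha, hpa⟩ := rep_pt i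
  obtain ⟨b, hb, hqb⟩ := rep_pt j
  rw [mem_Xhyp_iff] at hmem
  simp only [Fin.sum_univ_two, hpa, hqb, Pi.smul_apply, smul_eq_mul] at hmem
  fin_cases i <;> fin_cases j <;>
    simp only [Fin.mk_zero, Fin.mk_one] <;>
    refine cancel_sq a b _ ha hb ?_ <;>
    · simp [Pi.single_apply] at hmem
      linear_combination hmem

lemma mem_Xhyp_of (c : Fin 2 → Fin 2 → Fin 2 → ℂ) (i j : Fin 2) (u : ℂ)
    (h : c i j 0 + c i j 1 * u ^ 2 = 0) : (pt i, pt j, qpt u) ∈ Xhyp c := by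
  obtain ⟨a, ha, hpa⟩ := rep_pt i
  obtain ⟨b, hb, hqb⟩ := rep_pt j
  obtain ⟨d, hd, hrd⟩ := rep_qpt u
  rw [mem_Xhyp_iff]
  simp only [Fin.sum_univ_two, hpa, hqb, hrd, Pi.smul_apply, smul_eq_mul]
  fin_cases i <;> fin_cases j <;>
    · simp only [Fin.mk_zero, Fin.mk_one] at h ⊢
      simp [Pi.single_apply]
      linear_combination a ^ 2 * b ^ 2 * d ^ 2 * h

lemma qpt_inj {u v : ℂ} (h : qpt u = qpt v) : u = v := by
  rw [qpt, qpt, Projectivization.mk_eq_mk_iff'] at h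
  obtain ⟨a, ha⟩ := h
  have h0 := congrFun ha 0
  have h1 := congrFun ha 1
  simp at h0 h1
  rw [h0] at h1
  simp at h1
  exact h1.symm

lemma pt_ne : pt 0 ≠ pt 1 := by
  intro h
  rw [pt, pt, Projectivization.mk_eq_mk_iff'] at h
  obtain ⟨a, ha⟩ := h
  have h0 := congrFun ha 0
  simp [Pi.single_apply] at h0

lemma iota_pt (i : Fin 2) : iota (pt i) = pt i := by
  obtain ⟨a, ha, hpa⟩ := rep_pt i
  rw [iota_fixed_iff]
  fin_cases i
  · right; rw [hpa]; simp [Pi.single_apply]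
  · left; rw [hpa]; simp [Pi.single_apply]

lemma eq_pt_of_rep_eq_zero (p : P1) :
    (p.rep 0 = 0 → p = pt 1) ∧ (p.rep 1 = 0 → p = pt 0) := by
  have hnz := p.rep_nonzero
  constructor
  · intro h
    have h1 : p.rep 1 ≠ 0 := by
      intro h1; apply hnz; funext i; fin_cases i <;> simp [h, h1]
    rw [← Projectivization.mk_rep p, pt, Projectivization.mk_eq_mk_iff']
    refine ⟨p.rep 1, funext fun i => ?_⟩
    fin_cases i <;> simp [Pi.single_apply, h]
  · intro h
    have h0 : p.rep 0 ≠ 0 := by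
      intro h0; apply hnz; funext i; fin_cases i <;> simp [h, h0]
    rw [← Projectivization.mk_rep p, pt, Projectivization.mk_eq_mk_iff']
    refine ⟨p.rep 0, funext fun i => ?_⟩
    fin_cases i <;> simp [Pi.single_apply, h]

/-- The set of points of the triple-double K3 hypersurface `X` fixed by the involution
`ι₁₁₀` is finite, of cardinality exactly `8` (so `ι₁₁₀` restricts to a Nikulin involution
on `X`). -/
theorem stmt_14 (c : Fin 2 → Fin 2 → Fin 2 → ℂ) (hc : ∀ i j k, c i j k ≠ 0) :
    {t ∈ Xhyp c | iota110 t = t}.Finite ∧ {t ∈ Xhyp c | iota110 t = t}.ncard = 8 := by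
  have hsq : ∀ i j : Fin 2, ∃ z : ℂ, z ^ 2 = -(c i j 0) / (c i j 1) := fun i j =>
    IsAlgClosed.exists_pow_nat_eq _ two_pos
  choose w hw using hsq
  have hwne : ∀ i j, w i j ≠ 0 := by
    intro i j h
    have h0 : -(c i j 0) / (c i j 1) = 0 := by
      rw [← hw i j, h]; ring
    rcases div_eq_zero_iff.mp h0 with h1 | h1
    · exact hc i j 0 (neg_eq_zero.mp h1)
    · exact hc i j 1 h1
  set f : Fin 2 × Fin 2 × Bool → P1 × P1 × P1 :=
    fun x => (pt x.1, pt x.2.1, qpt (if x.2.2 then w x.1 x.2.1 else -w x.1 x.2.1)) with hf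
  have hinjpt : Function.Injective pt := by
    intro a b hab
    fin_cases a <;> fin_cases b
    · rfl
    · exact absurd hab pt_ne
    · exact absurd hab.symm pt_ne
    · rfl
  have hinj : Function.Injective f := by
    rintro ⟨i, j, s⟩ ⟨i', j', s'⟩ h
    simp only [hf, Prod.mk.injEq] at h
    obtain ⟨h1, h2, h3⟩ := h
    obtain rfl := hinjpt h1
    obtain rfl := hinjpt h2
    have h4 := qpt_inj h3
    have hs : s = s' := by
      cases s <;> cases s' <;> simp only [Bool.false_eq_true, if_false, if_true, reduceIte] at h4 <;>
        first
          | rfl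
          | exact absurd (show w i j = 0 by linear_combination (1/2 : ℂ) * h4) (hwne i j)
          | exact absurd (show w i j = 0 by linear_combination (-1/2 : ℂ) * h4) (hwne i j)
    rw [hs]
  have hset : {t ∈ Xhyp c | iota110 t = t} = Set.range f := by
    ext t
    simp only [Set.mem_setOf_eq, Set.mem_range]
    constructor
    · rintro ⟨hmem, hfix⟩
      obtain ⟨p, q, r⟩ := t
      have hfix1 : iota p = p := congrArg Prod.fst hfix
      have hfix2 : iota q = q := congrArg (fun t => t.2.1) hfix
      obtain ⟨i, hpi⟩ : ∃ i, p = pt i := by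
        rcases (iota_fixed_iff p).mp hfix1 with h | h
        · exact ⟨1, (eq_pt_of_rep_eq_zero p).1 h⟩
        · exact ⟨0, (eq_pt_of_rep_eq_zero p).2 h⟩
      obtain ⟨j, hqj⟩ : ∃ j, q = pt j := by
        rcases (iota_fixed_iff q).mp hfix2 with h | h
        · exact ⟨1, (eq_pt_of_rep_eq_zero q).1 h⟩
        · exact ⟨0, (eq_pt_of_rep_eq_zero q).2 h⟩
      subst hpi hqj
      have key := key_eq c i j r hmem
      have hz0 : r.rep 0 ≠ 0 := by
        intro h0
        have h1 : r.rep 1 ≠ 0 := by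
          intro h1
          exact r.rep_nonzero (funext fun k => by fin_cases k <;> simp [h0, h1])
        rw [h0] at key
        have : c i j 1 * r.rep 1 ^ 2 = 0 := by linear_combination key
        rcases mul_eq_zero.mp this with h | h
        · exact hc i j 1 h
        · exact h1 (by simpa using h)
      set u := r.rep 1 / r.rep 0 with hu
      have hr : r = qpt u := by
        rw [← Projectivization.mk_rep r, qpt, Projectivization.mk_eq_mk_iff']
        refine ⟨r.rep 0, funext fun k => ?_⟩
        fin_cases k <;> simp [hu]
        field_simp
      have hu2 : u ^ 2 = (w i j) ^ 2 := by
        rw [hw i j, hu, div_pow, div_eq_div_iff (pow_ne_zero 2 hz0) (hc i j 1)]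
        linear_combination key
      have hsplit : (u - w i j) * (u + w i j) = 0 := by linear_combination hu2
      rcases mul_eq_zero.mp hsplit with h | h
      · refine ⟨(i, j, true), ?_⟩
        show (pt i, pt j, qpt (w i j)) = (pt i, pt j, r)
        rw [hr, sub_eq_zero.mp h]
      · refine ⟨(i, j, false), ?_⟩
        show (pt i, pt j, qpt (-w i j)) = (pt i, pt j, r)
        rw [hr, show u = -w i j by linear_combination h]
    · rintro ⟨⟨i, j, s⟩, rfl⟩
      refine ⟨?_, ?_⟩
      · apply mem_Xhyp_of
        have hu2 : (if s then w i j else -w i j) ^ 2 = -(c i j 0) / (c i j 1) := by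
          cases s <;> simp [hw i j]
        rw [hu2]
        field_simp [hc i j 1]
        ring
      · simp only [hf, iota110, iota_pt]
  rw [hset]
  refine ⟨Set.finite_range f, ?_⟩
  rw [← Set.image_univ, Set.ncard_image_of_injective _ hinj]
  simp [Set.ncard_univ, Nat.card_eq_fintype_card]
end

section
/- There exist 6×6 integer matrices M₁ and M₂, each of determinant ±1, such that M₁ · B_Q · M₂ is the diagonal matrix diag(1, 1, 2, 2, 4, 4); i.e., the Smith normal form of B_Q is diag(1,1,2,2,4,4). -/
open Matrix

/-! The transformation matrices come from integer row and column reduction of `B_Q`, followed by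
elementary operations that keep the product diagonal but shrink the entries. Each is unimodular
because it has an explicit integer inverse, so every remaining claim is a finite computation. -/

theorem Matrix.det_eq_one_or_neg_one_of_mul_eq_one {n : Type*} [Fintype n] [DecidableEq n]
    {M N : Matrix n n ℤ} (h : M * N = 1) : M.det = 1 ∨ M.det = -1 :=
  Int.isUnit_iff.mp (isUnit_det_of_right_inverse h)

namespace B_Q

def rowTransform : Matrix (Fin 6) (Fin 6) ℤ :=
  !![  1,  0,   0,  0,   0,  0;
       5,  1,   1,  0,   2,  0;
     -22,  2, -14, -9, -17, -6;
       3, -1,   4,  3,   5,  2;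
      10,  0,   8,  5,  12,  4;
       4, -4,   3,  3,  -1,  1]

def rowTransformInv : Matrix (Fin 6) (Fin 6) ℤ :=
  !![ 1,  0,  0,  0,  0,  0;
     -1, -6, -5, -1, -6, -4;
     -8, -1, -1, -3,  0,  0;
      6, -4, -4,  4, -7, -4;
      2,  4,  3,  2,  3,  2;
      0, -5, -2, -5,  0, -1]

def colTransform : Matrix (Fin 6) (Fin 6) ℤ :=
  !![0, 0, 9, -4,  0, -2;
     0, 1, 1,  0,  6,  4;
     1, 0, 6, -2, -1, -2;
     0, 0, 4, -2,  0, -1;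
     0, 0, 7, -3, -1, -2;
     0, 0, 2,  0, -3, -2]

def colTransformInv : Matrix (Fin 6) (Fin 6) ℤ :=
  !![-2, 0, 1,  0,  2, -1;
     -5, 1, 0, 10,  0,  2;
      1, 0, 0, -2,  0,  0;
      3, 0, 0, -2, -3,  1;
      2, 0, 0,  2, -4,  1;
     -2, 0, 0, -5,  6, -2]

theorem rowTransform_mul_rowTransformInv : rowTransform * rowTransformInv = 1 := by
  decide

theorem colTransform_mul_colTransformInv : colTransform * colTransformInv = 1 := by
  decide

theorem rowTransform_mul_mul_colTransform :
    rowTransform * B_Q * colTransform = diagonal ![1, 1, 2, 2, 4, 4] := by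
  decide

end B_Q

/-- The Smith normal form of `B_Q` is `diag(1,1,2,2,4,4)`: there are integer matrices `M₁`
and `M₂` of determinant `±1` with `M₁ · B_Q · M₂ = diag(1,1,2,2,4,4)`. -/
theorem stmt_16 :
    ∃ M₁ M₂ : Matrix (Fin 6) (Fin 6) ℤ,
      (M₁.det = 1 ∨ M₁.det = -1) ∧ (M₂.det = 1 ∨ M₂.det = -1) ∧
      M₁ * B_Q * M₂ = Matrix.diagonal ![1, 1, 2, 2, 4, 4] :=
  ⟨B_Q.rowTransform, B_Q.colTransform,
    det_eq_one_or_neg_one_of_mul_eq_one B_Q.rowTransform_mul_rowTransformInv,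
    det_eq_one_or_neg_one_of_mul_eq_one B_Q.colTransform_mul_colTransformInv,
    B_Q.rowTransform_mul_mul_colTransform⟩
end
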